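/- Let a₁ ≤ b₁ ≤ a₂ ≤ b₂ be real numbers with a₁ < a₂ and b₁ < b₂, let μ, ν be the uniform probability measures on [a₁,a₂] and [b₁,b₂], and define the mutual energy E(μ,ν) := ∫∫ max(x,y) dμ dν − ½∫∫ max dμ dμ − ½∫∫ max dν dν. With ℓ_a = a₂−a₁, ℓ_b = b₂−b₁ and overlap length ℓ_{ab} = a₂−b₁ ≥ 0, one has E(μ,ν) = ℓ_a/6 + ℓ_b/6 − ℓ_{ab}/2 + ℓ_{ab}³/(6·ℓ_a·ℓ_b). -/

import Mathlib

open MeasureTheory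

/-- The uniform probability measure on the interval `[r, s]`. -/
noncomputable def unifIcc (r s : ℝ) : Measure ℝ :=
  (ENNReal.ofReal (s - r))⁻¹ • (volume.restrict (Set.Icc r s))

/-- The mutual energy of two measures on `ℝ` with respect to the kernel `max x y`. -/
noncomputable def mutualE (μ ν : Measure ℝ) : ℝ :=
  (∫ x, ∫ y, max x y ∂ν ∂μ)
    - (1/2) * (∫ x, ∫ y, max x y ∂μ ∂μ)
    - (1/2) * (∫ x, ∫ y, max x y ∂ν ∂ν)

/-!
The potential of the uniform measure on `[r, s]` at a point `x ≤ s` is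
`(r + s) / 2 + (max x r - r) ^ 2 / (2 (s - r))`: a constant plus the square of the part of
`[r, s]` lying below `x`. Integrating it against the uniform measure on `[a, b]`, with
`a ≤ r ≤ b ≤ s`, gives `(r + s) / 2 + (b - r) ^ 3 / (6 (b - a) (s - r))`, so all three terms
of the mutual energy are overlap-cubed corrections to midpoints, and the claim is algebra.
-/

lemma integral_unifIcc {r s : ℝ} (hrs : r < s) (f : ℝ → ℝ) :
    ∫ y, f y ∂(unifIcc r s) = (s - r)⁻¹ * ∫ y in r..s, f y := by
  rw [unifIcc, integral_smul_measure, ENNReal.toReal_inv,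
    ENNReal.toReal_ofReal (sub_nonneg.2 hrs.le), smul_eq_mul, integral_Icc_eq_integral_Ioc,
    intervalIntegral.integral_of_le hrs.le]

lemma intervalIntegral_max_left {x r s : ℝ} (hxs : x ≤ s) (hrs : r ≤ s) :
    ∫ y in r..s, max x y = (s ^ 2 - r ^ 2) / 2 + (max x r - r) ^ 2 / 2 := by
  -- Splitting at `m = max x r` avoids a case split on `x ≤ r`: `max x y = m` on all of `[r, m]`.
  set m := max x r
  have hrm : r ≤ m := le_max_right x r
  have hms : m ≤ s := max_le hxs hrs
  have hint : ∀ u v : ℝ, IntervalIntegrable (fun y => max x y) volume u v := fun u v =>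
    (continuous_const.max continuous_id).intervalIntegrable u v
  have h_low : ∫ y in r..m, max x y = m * (m - r) := by
    rw [intervalIntegral.integral_congr (g := fun _ => m), intervalIntegral.integral_const,
      smul_eq_mul, mul_comm]
    intro y hy
    rw [Set.uIcc_of_le hrm] at hy
    exact le_antisymm (max_le (le_max_left x r) hy.2) (max_le_max le_rfl hy.1)
  have h_high : ∫ y in m..s, max x y = (s ^ 2 - m ^ 2) / 2 := by
    rw [intervalIntegral.integral_congr (g := fun y => y), integral_id]
    intro y hy
    rw [Set.uIcc_of_le hms] at hy
    exact max_eq_right ((le_max_left x r).trans hy.1)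
  rw [← intervalIntegral.integral_add_adjacent_intervals (hint r m) (hint m s), h_low, h_high]
  ring

lemma integral_max_unifIcc {x r s : ℝ} (hxs : x ≤ s) (hrs : r < s) :
    ∫ y, max x y ∂(unifIcc r s) = (r + s) / 2 + (max x r - r) ^ 2 / (2 * (s - r)) := by
  rw [integral_unifIcc hrs, intervalIntegral_max_left hxs hrs.le]
  have : s - r ≠ 0 := sub_ne_zero.2 hrs.ne'
  field_simp
  ring

lemma intervalIntegral_sq_max_sub {a b c : ℝ} (hac : a ≤ c) (hcb : c ≤ b) :
    ∫ x in a..b, (max x c - c) ^ 2 = (b - c) ^ 3 / 3 := by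
  have hint : ∀ u v : ℝ, IntervalIntegrable (fun x => (max x c - c) ^ 2) volume u v :=
    fun u v => (by fun_prop : Continuous fun x : ℝ => (max x c - c) ^ 2).intervalIntegrable u v
  have h_low : ∫ x in a..c, (max x c - c) ^ 2 = 0 := by
    rw [intervalIntegral.integral_congr (g := fun _ => 0), intervalIntegral.integral_zero]
    intro x hx
    rw [Set.uIcc_of_le hac] at hx
    simp [max_eq_right hx.2]
  have h_high : ∫ x in c..b, (max x c - c) ^ 2 = (b - c) ^ 3 / 3 := by
    rw [intervalIntegral.integral_congr (g := fun x => (x - c) ^ 2),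
      intervalIntegral.integral_comp_sub_right (fun x => x ^ 2), integral_pow]
    · ring
    intro x hx
    rw [Set.uIcc_of_le hcb] at hx
    simp only [max_eq_left hx.1]
  rw [← intervalIntegral.integral_add_adjacent_intervals (hint a c) (hint c b), h_low, h_high,
    zero_add]

lemma integral_integral_max_unifIcc {a b r s : ℝ} (hab : a < b) (hrs : r < s)
    (har : a ≤ r) (hrb : r ≤ b) (hbs : b ≤ s) :
    ∫ x, ∫ y, max x y ∂(unifIcc r s) ∂(unifIcc a b)
      = (r + s) / 2 + (b - r) ^ 3 / (6 * (b - a) * (s - r)) := by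
  have hpot : Set.EqOn (fun x => ∫ y, max x y ∂(unifIcc r s))
      (fun x => (r + s) / 2 + (2 * (s - r))⁻¹ * (max x r - r) ^ 2) (Set.uIcc a b) := by
    intro x hx
    rw [Set.uIcc_of_le hab.le] at hx
    simp only [integral_max_unifIcc (hx.2.trans hbs) hrs, div_eq_inv_mul _ (2 * (s - r))]
  rw [integral_unifIcc hab, intervalIntegral.integral_congr hpot,
    intervalIntegral.integral_add intervalIntegrable_const
      (((by fun_prop : Continuous fun x : ℝ => (max x r - r) ^ 2).intervalIntegrable a b).const_mul _),
    intervalIntegral.integral_const, intervalIntegral.integral_const_mul,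
    intervalIntegral_sq_max_sub har hrb, smul_eq_mul]
  have : b - a ≠ 0 := sub_ne_zero.2 hab.ne'
  have : s - r ≠ 0 := sub_ne_zero.2 hrs.ne'
  field_simp
  ring

theorem stmt_11 (a₁ b₁ a₂ b₂ : ℝ) (h₁ : a₁ ≤ b₁) (h₂ : b₁ ≤ a₂) (h₃ : a₂ ≤ b₂)
    (ha : a₁ < a₂) (hb : b₁ < b₂) :
    mutualE (unifIcc a₁ a₂) (unifIcc b₁ b₂)
      = (a₂ - a₁) / 6 + (b₂ - b₁) / 6 - (a₂ - b₁) / 2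
        + (a₂ - b₁) ^ 3 / (6 * (a₂ - a₁) * (b₂ - b₁)) := by
  rw [mutualE, integral_integral_max_unifIcc ha hb h₁ h₂ h₃,
    integral_integral_max_unifIcc ha ha le_rfl ha.le le_rfl,
    integral_integral_max_unifIcc hb hb le_rfl hb.le le_rfl]
  have : a₂ - a₁ ≠ 0 := sub_ne_zero.2 ha.ne'
  have : b₂ - b₁ ≠ 0 := sub_ne_zero.2 hb.ne'
  field_simp
  ring
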